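/- Let E be a quantum channel on M₂(ℂ) ⊗ M_d(ℂ) such that for all density operators ρ on ℂ^d and all one-qubit pure states |ψ⟩ with |ψ⟩ ∈ {|0⟩, |1⟩, |+⟩, |+i⟩, |−⟩}, there exists a density operator ρ' on ℂ^d with E(|ψ⟩⟨ψ| ⊗ ρ) = |ψ⟩⟨ψ| ⊗ ρ'. Then for every one-qubit pure state |φ⟩ and every density operator ρ there exists ρ'' with E(|φ⟩⟨φ| ⊗ ρ) = |φ⟩⟨φ| ⊗ ρ''; consequently E = id₂ ⊗ E' for some channel E' on M_d(ℂ). -/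

import Mathlib

open Matrix Kronecker ComplexOrder

noncomputable section

/-- The extension `Φ ⊗ id_k` of a linear map `Φ` on operators. -/
def tensId {n : Type*} [Fintype n] [DecidableEq n]
    (Φ : Matrix n n ℂ →ₗ[ℂ] Matrix n n ℂ) (k : ℕ)
    (M : Matrix (n × Fin k) (n × Fin k) ℂ) : Matrix (n × Fin k) (n × Fin k) ℂ :=
  Matrix.of fun p q => (Φ (Matrix.of fun a b => M (a, p.2) (b, q.2))) p.1 q.1

/-- Complete positivity. -/
def IsCP {n : Type*} [Fintype n] [DecidableEq n]
    (Φ : Matrix n n ℂ →ₗ[ℂ] Matrix n n ℂ) : Prop :=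
  ∀ (k : ℕ) (M : Matrix (n × Fin k) (n × Fin k) ℂ),
    M.PosSemidef → (tensId Φ k M).PosSemidef

/-- Outer product `|ψ⟩⟨ψ|` of a vector with itself. -/
def proj {m : Type*} (ψ : m → ℂ) : Matrix m m ℂ :=
  Matrix.of fun a b => ψ a * star (ψ b)

def ket0 : Fin 2 → ℂ := ![1, 0]
def ket1 : Fin 2 → ℂ := ![0, 1]
def ketPlus : Fin 2 → ℂ := ![(Real.sqrt 2 : ℂ)⁻¹, (Real.sqrt 2 : ℂ)⁻¹]
def ketMinus : Fin 2 → ℂ := ![(Real.sqrt 2 : ℂ)⁻¹, -(Real.sqrt 2 : ℂ)⁻¹]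
def ketPlusI : Fin 2 → ℂ := ![(Real.sqrt 2 : ℂ)⁻¹, (Real.sqrt 2 : ℂ)⁻¹ * Complex.I]

/-! ### Auxiliary lemmas -/

def ketMinusI : Fin 2 → ℂ := ![(Real.sqrt 2 : ℂ)⁻¹, -((Real.sqrt 2 : ℂ)⁻¹ * Complex.I)]

lemma sq_isq : ((Real.sqrt 2 : ℂ))⁻¹ * ((Real.sqrt 2 : ℂ))⁻¹ = 1/2 := by
  rw [← mul_inv]; norm_cast
  rw [Real.mul_self_sqrt (by norm_num)]; norm_num

lemma star_isq : star ((Real.sqrt 2 : ℂ))⁻¹ = ((Real.sqrt 2 : ℂ))⁻¹ := by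
  rw [star_inv₀, Complex.star_def, Complex.conj_ofReal]

lemma proj_quad {m : Type*} [Fintype m] (ψ x : m → ℂ) :
    star x ⬝ᵥ (proj ψ) *ᵥ x =
      (∑ a, star (x a) * ψ a) * star (∑ a, star (x a) * ψ a) := by
  rw [star_sum]
  calc star x ⬝ᵥ (proj ψ) *ᵥ x = ∑ a, ∑ b, star (x a) * (ψ a * star (ψ b) * x b) := by
        simp [dotProduct, mulVec, proj, Finset.mul_sum]
    _ = ∑ a, ∑ b, (star (x a) * ψ a) * star (star (x b) * ψ b) := by
        refine Finset.sum_congr rfl fun a _ => Finset.sum_congr rfl fun b _ => ?_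
        rw [StarMul.star_mul, star_star]; ring
    _ = _ := by rw [Finset.sum_mul_sum]

lemma proj_psd {m : Type*} [Fintype m] (ψ : m → ℂ) : (proj ψ).PosSemidef := by
  refine Matrix.PosSemidef.of_dotProduct_mulVec_nonneg ?_ ?_
  · ext a b
    simp [proj, conjTranspose_apply, mul_comm]
  · intro x
    rw [proj_quad, mul_comm]
    exact star_mul_self_nonneg _

lemma trace_proj {m : Type*} [Fintype m] (ψ : m → ℂ) :
    (proj ψ).trace = ∑ x, ψ x * star (ψ x) := by
  simp [trace, diag, proj]

lemma psd_trace_zero {m : Type*} [Fintype m] [DecidableEq m] {A : Matrix m m ℂ}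
    (hA : A.PosSemidef) (h : A.trace = 0) : A = 0 := by
  exact (Matrix.PosSemidef.trace_eq_zero_iff hA).mp h

/-! ### Explicit forms of the qubit projections -/

lemma proj_ket0 : proj ket0 = !![1, 0; 0, 0] := by
  ext i j; fin_cases i <;> fin_cases j <;> simp [proj, ket0]

lemma proj_ket1 : proj ket1 = !![0, 0; 0, 1] := by
  ext i j; fin_cases i <;> fin_cases j <;> simp [proj, ket1]

lemma proj_ketPlus : proj ketPlus = !![1/2, 1/2; 1/2, 1/2] := by
  ext i j; fin_cases i <;> fin_cases j <;>
    simp [proj, ketPlus, star_isq, sq_isq]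

lemma proj_ketMinus : proj ketMinus = !![1/2, -(1/2); -(1/2), 1/2] := by
  ext i j; fin_cases i <;> fin_cases j <;>
    simp [proj, ketMinus, star_isq, sq_isq]

lemma proj_ketPlusI :
    proj ketPlusI = !![1/2, -(Complex.I/2); Complex.I/2, 1/2] := by
  ext i j; fin_cases i <;> fin_cases j <;>
    simp [proj, ketPlusI, star_isq, sq_isq, mul_comm, mul_assoc, mul_left_comm, Complex.mul_conj]
  all_goals ring_nf
  all_goals (simp [Complex.I_sq, sq_isq]; try norm_num)

lemma proj_ketMinusI :
    proj ketMinusI = !![1/2, Complex.I/2; -(Complex.I/2), 1/2] := by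
  ext i j; fin_cases i <;> fin_cases j <;>
    simp [proj, ketMinusI, star_isq, sq_isq, mul_comm, mul_assoc, mul_left_comm, Complex.mul_conj]
  all_goals ring_nf
  all_goals (simp [Complex.I_sq, sq_isq]; try norm_num)

lemma minus_rel : proj ketMinus = proj ket0 + proj ket1 - proj ketPlus := by
  rw [proj_ket0, proj_ket1, proj_ketPlus, proj_ketMinus]
  ext i j; fin_cases i <;> fin_cases j <;> simp <;> norm_num

lemma minusI_rel : proj ketMinusI = proj ket0 + proj ket1 - proj ketPlusI := by
  rw [proj_ket0, proj_ket1, proj_ketPlusI, proj_ketMinusI]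
  ext i j; fin_cases i <;> fin_cases j <;> simp <;> norm_num

lemma qubit_decomp (A : Matrix (Fin 2) (Fin 2) ℂ) :
    A = (A 0 0 - (A 0 1 + A 1 0)/2 - Complex.I*(A 0 1 - A 1 0)/2) • proj ket0
      + (A 1 1 - (A 0 1 + A 1 0)/2 - Complex.I*(A 0 1 - A 1 0)/2) • proj ket1
      + (A 0 1 + A 1 0) • proj ketPlus
      + (Complex.I*(A 0 1 - A 1 0)) • proj ketPlusI := by
  rw [proj_ket0, proj_ket1, proj_ketPlus, proj_ketPlusI]
  ext i j
  fin_cases i <;> fin_cases j <;>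
    simp [Matrix.add_apply, Matrix.smul_apply, smul_eq_mul] <;>
    ring_nf <;> simp [Complex.I_sq] <;> ring

/-! ### Quadratic-form lemmas -/

lemma quad_kron {m₁ m₂ : Type*} [Fintype m₁] [Fintype m₂]
    (A : Matrix m₁ m₁ ℂ) (B : Matrix m₂ m₂ ℂ) (ψ : m₁ → ℂ) (v : m₂ → ℂ) :
    star (fun p : m₁ × m₂ => ψ p.1 * v p.2) ⬝ᵥ (A ⊗ₖ B) *ᵥ (fun p => ψ p.1 * v p.2)
      = (star ψ ⬝ᵥ A *ᵥ ψ) * (star v ⬝ᵥ B *ᵥ v) := by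
  calc star (fun p : m₁ × m₂ => ψ p.1 * v p.2) ⬝ᵥ (A ⊗ₖ B) *ᵥ (fun p => ψ p.1 * v p.2)
      = ∑ s, ∑ a, ∑ t, ∑ b,
          (star (ψ s) * (A s t * ψ t)) * (star (v a) * (B a b * v b)) := by
        simp only [dotProduct, mulVec, kroneckerMap_apply, Fintype.sum_prod_type,
          Pi.star_apply, Finset.mul_sum]
        refine Finset.sum_congr rfl fun s _ => Finset.sum_congr rfl fun a _ =>
          Finset.sum_congr rfl fun t _ => Finset.sum_congr rfl fun b _ => ?_
        rw [StarMul.star_mul]; ring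
    _ = (∑ s, ∑ t, star (ψ s) * (A s t * ψ t)) * (∑ a, ∑ b, star (v a) * (B a b * v b)) := by
        rw [Finset.sum_mul]
        refine Finset.sum_congr rfl fun s _ => ?_
        rw [Finset.mul_sum]
        refine Finset.sum_congr rfl fun a _ => ?_
        rw [Finset.sum_mul]
        exact Finset.sum_congr rfl fun t _ => (Finset.mul_sum _ _ _).symm
    _ = (star ψ ⬝ᵥ A *ᵥ ψ) * (star v ⬝ᵥ B *ᵥ v) := by
        simp [dotProduct, mulVec, Finset.mul_sum]

lemma proj_kron {m₁ m₂ : Type*} [Fintype m₁] [Fintype m₂] [DecidableEq m₂]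
    (ψ : m₁ → ℂ) (ρ : Matrix m₂ m₂ ℂ) :
    proj ψ ⊗ₖ ρ =
      (Matrix.of fun (a : m₂) (p : m₁ × m₂) => star (ψ p.1) * (if a = p.2 then 1 else 0))ᴴ
        * ρ * (Matrix.of fun (a : m₂) (p : m₁ × m₂) => star (ψ p.1) * (if a = p.2 then 1 else 0)) := by
  ext ⟨s, a⟩ ⟨t, b⟩
  simp only [kroneckerMap_apply, proj, Matrix.of_apply, mul_apply, conjTranspose_apply,
    Matrix.of_apply, Finset.sum_mul, StarMul.star_mul, star_star]
  rw [Finset.sum_comm]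
  simp [Finset.mul_sum, mul_ite, ite_mul, mul_comm, mul_assoc, mul_left_comm]

lemma proj_kron_psd {m₁ m₂ : Type*} [Fintype m₁] [Fintype m₂] [DecidableEq m₂]
    (ψ : m₁ → ℂ) {ρ : Matrix m₂ m₂ ℂ} (hρ : ρ.PosSemidef) :
    (proj ψ ⊗ₖ ρ).PosSemidef := by
  rw [proj_kron]
  exact hρ.conjTranspose_mul_mul_same _

lemma isCP_pos {n : Type*} [Fintype n] [DecidableEq n]
    {Φ : Matrix n n ℂ →ₗ[ℂ] Matrix n n ℂ} (h : IsCP Φ)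
    {N : Matrix n n ℂ} (hN : N.PosSemidef) : (Φ N).PosSemidef := by
  have h1 := h 1 (N.submatrix (fun p : n × Fin 1 => p.1) (fun p => p.1))
    (hN.submatrix _)
  have h2 := h1.submatrix (fun p : n => (p, (0 : Fin 1)))
  convert h2 using 2
  ext a b; rfl

/-! ### Spanning by density matrices -/

section density_span
variable {d : ℕ}

lemma proj_single (a : Fin d) : proj (Pi.single a 1) = Matrix.single a a 1 := by
  ext x y
  rcases eq_or_ne x a with hxa | hxa <;> rcases eq_or_ne y a with hya | hya <;>
    simp_all [proj, Pi.single_apply, Matrix.single, Ne.symm]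

lemma trace_single (a : Fin d) : (Matrix.single a a (1:ℂ)).trace = 1 := by
  simp [trace, diag, Matrix.single]

def uVec (a b : Fin d) : Fin d → ℂ :=
  fun x => (Real.sqrt 2 : ℂ)⁻¹ * ((Pi.single a 1 : Fin d → ℂ) x + (Pi.single b 1 : Fin d → ℂ) x)

def wVec (a b : Fin d) : Fin d → ℂ :=
  fun x => (Real.sqrt 2 : ℂ)⁻¹ * ((Pi.single a 1 : Fin d → ℂ) x + Complex.I * (Pi.single b 1 : Fin d → ℂ) x)

lemma trace_proj_u {a b : Fin d} (hab : a ≠ b) : (proj (uVec a b)).trace = 1 := by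
  rw [trace_proj]
  have key : ∀ x, uVec a b x * star (uVec a b x)
      = ((if x = a then 1/2 else 0) + (if x = b then 1/2 else 0) : ℂ) := by
    intro x
    rcases eq_or_ne x a with hxa | hxa <;> rcases eq_or_ne x b with hxb | hxb <;>
      simp_all [uVec, Pi.single_apply, star_isq, sq_isq, Ne.symm, mul_comm]
  simp only [key, Finset.sum_add_distrib, Finset.sum_ite_eq', Finset.mem_univ, if_true]
  norm_num

lemma trace_proj_w {a b : Fin d} (hab : a ≠ b) : (proj (wVec a b)).trace = 1 := by
  rw [trace_proj]
  have key : ∀ x, wVec a b x * star (wVec a b x)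
      = ((if x = a then 1/2 else 0) + (if x = b then 1/2 else 0) : ℂ) := by
    intro x
    rcases eq_or_ne x a with hxa | hxa <;> rcases eq_or_ne x b with hxb | hxb <;>
      simp_all [wVec, Pi.single_apply, star_isq, sq_isq, Ne.symm, Complex.star_def, _root_.map_mul,
        Complex.conj_I, Complex.conj_ofReal, map_inv₀]
    · ring_nf
      rw [show ((Real.sqrt 2:ℂ))⁻¹ ^ 2 = ((Real.sqrt 2:ℂ))⁻¹ * ((Real.sqrt 2:ℂ))⁻¹ by ring,
        sq_isq, Complex.I_sq]
      norm_num
  simp only [key, Finset.sum_add_distrib, Finset.sum_ite_eq', Finset.mem_univ, if_true]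
  norm_num

lemma stdBasis_combo {a b : Fin d} (hab : a ≠ b) :
    Matrix.single a b (1:ℂ) = proj (uVec a b) + Complex.I • proj (wVec a b)
      - ((1 + Complex.I)/2) • (Matrix.single a a 1 + Matrix.single b b 1) := by
  ext x y
  rcases eq_or_ne x a with hxa | hxa <;> rcases eq_or_ne x b with hxb | hxb <;>
    rcases eq_or_ne y a with hya | hya <;> rcases eq_or_ne y b with hyb | hyb <;>
    simp_all [proj, uVec, wVec, Matrix.single, Pi.single_apply, Ne.symm, Complex.star_def,
      _root_.map_mul, _root_.map_add, Complex.conj_I, Complex.conj_ofReal, map_inv₀, Matrix.sub_apply, Matrix.add_apply,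
      Matrix.smul_apply, smul_eq_mul] <;>
    (try ring_nf) <;>
    (try rw [show ((Real.sqrt 2:ℂ))⁻¹ ^ 2 = ((Real.sqrt 2:ℂ))⁻¹ * ((Real.sqrt 2:ℂ))⁻¹ by ring,
        sq_isq]) <;>
    first
      | ring1
      | linear_combination (1/2:ℂ) * Complex.I_sq
      | linear_combination (-1/2:ℂ) * Complex.I_sq
      | linear_combination (Complex.I/2) * Complex.I_sq
      | linear_combination (-Complex.I/2) * Complex.I_sq

/-- A Kronecker product with a fixed left factor, as a linear map. -/
def kronL {m : Type*} (A : Matrix m m ℂ) :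
    Matrix (Fin d) (Fin d) ℂ →ₗ[ℂ] Matrix (m × Fin d) (m × Fin d) ℂ where
  toFun N := A ⊗ₖ N
  map_add' N M := kronecker_add A N M
  map_smul' r N := kronecker_smul r A N

lemma extend_density {X : Type*} [AddCommGroup X] [Module ℂ X]
    (F G : Matrix (Fin d) (Fin d) ℂ →ₗ[ℂ] X)
    (h : ∀ ρ : Matrix (Fin d) (Fin d) ℂ, ρ.PosSemidef → ρ.trace = 1 → F ρ = G ρ)
    (N : Matrix (Fin d) (Fin d) ℂ) : F N = G N := by
  have base : ∀ a b : Fin d, F (Matrix.single a b 1) = G (Matrix.single a b 1) := by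
    intro a b
    have hdiag : ∀ c : Fin d, F (Matrix.single c c 1) = G (Matrix.single c c 1) := by
      intro c
      rw [← proj_single]
      exact h _ (proj_psd _) (by rw [proj_single]; exact trace_single c)
    rcases eq_or_ne a b with rfl | hab
    · exact hdiag a
    · rw [stdBasis_combo hab]
      simp only [LinearMap.map_sub, LinearMap.map_add, LinearMap.map_smul]
      rw [hdiag a, hdiag b,
        h _ (proj_psd (uVec a b)) (trace_proj_u hab),
        h _ (proj_psd (wVec a b)) (trace_proj_w hab)]
  conv_lhs => rw [matrix_eq_sum_single N]
  conv_rhs => rw [matrix_eq_sum_single N]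
  rw [map_sum, map_sum]
  refine Finset.sum_congr rfl fun a _ => ?_
  rw [map_sum, map_sum]
  refine Finset.sum_congr rfl fun b _ => ?_
  have : Matrix.single a b (N a b) = N a b • Matrix.single a b (1:ℂ) := by
    rw [smul_single, smul_eq_mul, mul_one]
  rw [this, LinearMap.map_smul, LinearMap.map_smul, base a b]

end density_span

lemma sub_kron {l m n p : Type*} (A B : Matrix l m ℂ) (C : Matrix n p ℂ) :
    (A - B) ⊗ₖ C = A ⊗ₖ C - B ⊗ₖ C := by
  ext ⟨i, j⟩ ⟨k, r⟩
  simp [kroneckerMap_apply, sub_mul]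

lemma quadPlusI_ket0 : star ketPlusI ⬝ᵥ (proj ket0) *ᵥ ketPlusI = 1/2 := by
  rw [proj_ket0]
  simp [dotProduct, mulVec, Fin.sum_univ_two, ketPlusI, star_isq, sq_isq]

lemma quadPlusI_ket1 : star ketPlusI ⬝ᵥ (proj ket1) *ᵥ ketPlusI = 1/2 := by
  rw [proj_ket1]
  simp [dotProduct, mulVec, Fin.sum_univ_two, ketPlusI, Complex.star_def,
    _root_.map_mul, Complex.conj_I, Complex.conj_ofReal, map_inv₀]
  ring_nf
  rw [show ((Real.sqrt 2:ℂ))⁻¹ ^ 2 = ((Real.sqrt 2:ℂ))⁻¹ * ((Real.sqrt 2:ℂ))⁻¹ by ring, sq_isq,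
    Complex.I_sq]
  ring

lemma quadPlusI_ketPlusI : star ketPlusI ⬝ᵥ (proj ketPlusI) *ᵥ ketPlusI = 1 := by
  rw [proj_ketPlusI]
  simp [dotProduct, mulVec, Fin.sum_univ_two, ketPlusI, Complex.star_def,
    _root_.map_mul, Complex.conj_I, Complex.conj_ofReal, map_inv₀]
  ring_nf
  rw [show ((Real.sqrt 2:ℂ))⁻¹ ^ 2 = ((Real.sqrt 2:ℂ))⁻¹ * ((Real.sqrt 2:ℂ))⁻¹ by ring, sq_isq,
    Complex.I_sq]
  ring

/-! ### The main theorem -/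

/-- If a quantum channel `E` on `M₂(ℂ) ⊗ M_d(ℂ)` satisfies
`E(|ψ⟩⟨ψ| ⊗ ρ) = |ψ⟩⟨ψ| ⊗ ρ'` for all density operators `ρ` and all
`|ψ⟩ ∈ {|0⟩, |1⟩, |+⟩, |+i⟩, |−⟩}`, then it does so for *every* one-qubit pure state,
and consequently `E = id₂ ⊗ E'` for some channel `E'` on `M_d(ℂ)`. -/
theorem stmt12 {d : ℕ}
    (E : Matrix (Fin 2 × Fin d) (Fin 2 × Fin d) ℂ →ₗ[ℂ]
         Matrix (Fin 2 × Fin d) (Fin 2 × Fin d) ℂ)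
    (hCP : IsCP E) (hTP : ∀ M, (E M).trace = M.trace)
    (hfix : ∀ ψ ∈ ({ket0, ket1, ketPlus, ketPlusI, ketMinus} : Set (Fin 2 → ℂ)),
      ∀ ρ : Matrix (Fin d) (Fin d) ℂ, ρ.PosSemidef → ρ.trace = 1 →
        ∃ ρ' : Matrix (Fin d) (Fin d) ℂ, ρ'.PosSemidef ∧ ρ'.trace = 1 ∧
          E (proj ψ ⊗ₖ ρ) = proj ψ ⊗ₖ ρ') :
    (∀ φ : Fin 2 → ℂ, (∑ i, ‖φ i‖ ^ 2) = 1 →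
      ∀ ρ : Matrix (Fin d) (Fin d) ℂ, ρ.PosSemidef → ρ.trace = 1 →
        ∃ ρ'' : Matrix (Fin d) (Fin d) ℂ, ρ''.PosSemidef ∧ ρ''.trace = 1 ∧
          E (proj φ ⊗ₖ ρ) = proj φ ⊗ₖ ρ'') ∧
    (∃ E' : Matrix (Fin d) (Fin d) ℂ →ₗ[ℂ] Matrix (Fin d) (Fin d) ℂ,
      IsCP E' ∧ (∀ N, (E' N).trace = N.trace) ∧
      ∀ M : Matrix (Fin 2 × Fin d) (Fin 2 × Fin d) ℂ, ∀ p q,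
        E M p q = (E' (Matrix.of fun x y => M (p.1, x) (q.1, y))) p.2 q.2) := by
  have h0 := hfix ket0 (by simp)
  have h1 := hfix ket1 (by simp)
  have hp := hfix ketPlus (by simp)
  have hi := hfix ketPlusI (by simp)
  have hm := hfix ketMinus (by simp)
  -- Main claim: a single output state works for all four basis inputs.
  have main : ∀ ρ : Matrix (Fin d) (Fin d) ℂ, ρ.PosSemidef → ρ.trace = 1 →
      ∃ σ : Matrix (Fin d) (Fin d) ℂ, σ.PosSemidef ∧ σ.trace = 1 ∧
        E (proj ket0 ⊗ₖ ρ) = proj ket0 ⊗ₖ σ ∧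
        E (proj ket1 ⊗ₖ ρ) = proj ket1 ⊗ₖ σ ∧
        E (proj ketPlus ⊗ₖ ρ) = proj ketPlus ⊗ₖ σ ∧
        E (proj ketPlusI ⊗ₖ ρ) = proj ketPlusI ⊗ₖ σ := by
    intro ρ hρ htρ
    obtain ⟨ρ0, hρ0, ht0, e0⟩ := h0 ρ hρ htρ
    obtain ⟨ρ1, hρ1, ht1, e1⟩ := h1 ρ hρ htρ
    obtain ⟨ρp, hρp, htp, ep⟩ := hp ρ hρ htρ
    obtain ⟨ρi, hρi, hti, ei⟩ := hi ρ hρ htρ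
    obtain ⟨ρm, hρm, htm, em⟩ := hm ρ hρ htρ
    have lin : proj ketMinus ⊗ₖ ρm
        = proj ket0 ⊗ₖ ρ0 + proj ket1 ⊗ₖ ρ1 - proj ketPlus ⊗ₖ ρp := by
      rw [← e0, ← e1, ← ep, ← em, ← LinearMap.map_add, ← LinearMap.map_sub]
      congr 1
      rw [minus_rel, sub_kron, add_kronecker]
    have ent : ∀ (s t : Fin 2) (x y : Fin d),
        (proj ketMinus) s t * ρm x y
          = (proj ket0) s t * ρ0 x y + (proj ket1) s t * ρ1 x y
            - (proj ketPlus) s t * ρp x y := by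
      intro s t x y
      have := congrFun (congrFun lin (s, x)) (t, y)
      simpa [kroneckerMap_apply, Matrix.add_apply, Matrix.sub_apply] using this
    have hpm : ρp = ρm := by
      ext x y
      have := ent 0 1 x y
      rw [proj_ket0, proj_ket1, proj_ketPlus, proj_ketMinus] at this
      simp at this
      first
        | exact this
        | exact this.symm
        | linear_combination this
        | linear_combination -this
        | linear_combination (2:ℂ) * this
        | linear_combination (-2:ℂ) * this
    have h0m : ρ0 = ρm := by
      ext x y
      have := ent 0 0 x y
      rw [proj_ket0, proj_ket1, proj_ketPlus, proj_ketMinus, hpm] at this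
      simp at this
      first
        | exact this
        | exact this.symm
        | linear_combination this
        | linear_combination -this
        | linear_combination (2:ℂ) * this
        | linear_combination (-2:ℂ) * this
    have h1m : ρ1 = ρm := by
      ext x y
      have := ent 1 1 x y
      rw [proj_ket0, proj_ket1, proj_ketPlus, proj_ketMinus, hpm] at this
      simp at this
      first
        | exact this
        | exact this.symm
        | linear_combination this
        | linear_combination -this
        | linear_combination (2:ℂ) * this
        | linear_combination (-2:ℂ) * this
    -- Now use positivity to identify ρi with ρ0.
    have e1' : E (proj ket1 ⊗ₖ ρ) = proj ket1 ⊗ₖ ρ0 := by rw [e1, h1m, h0m]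
    have hS : E (proj ketMinusI ⊗ₖ ρ)
        = proj ket0 ⊗ₖ ρ0 + proj ket1 ⊗ₖ ρ0 - proj ketPlusI ⊗ₖ ρi := by
      rw [minusI_rel, sub_kron, add_kronecker, LinearMap.map_sub, LinearMap.map_add, e0, e1', ei]
    have hSpos : (proj ket0 ⊗ₖ ρ0 + proj ket1 ⊗ₖ ρ0 - proj ketPlusI ⊗ₖ ρi).PosSemidef := by
      rw [← hS]
      exact isCP_pos hCP (proj_kron_psd _ hρ)
    have hD : (ρ0 - ρi).PosSemidef := by
      refine Matrix.PosSemidef.of_dotProduct_mulVec_nonneg ?_ ?_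
      · exact hρ0.1.sub hρi.1
      · intro v
        have hq := hSpos.dotProduct_mulVec_nonneg (fun p : Fin 2 × Fin d => ketPlusI p.1 * v p.2)
        rw [sub_mulVec, add_mulVec, dotProduct_sub, dotProduct_add,
          quad_kron, quad_kron, quad_kron, quadPlusI_ket0, quadPlusI_ket1,
          quadPlusI_ketPlusI] at hq
        have heq : star v ⬝ᵥ (ρ0 - ρi) *ᵥ v
            = 1/2 * (star v ⬝ᵥ ρ0 *ᵥ v) + 1/2 * (star v ⬝ᵥ ρ0 *ᵥ v)
              - 1 * (star v ⬝ᵥ ρi *ᵥ v) := by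
          rw [sub_mulVec, dotProduct_sub]; ring
        rw [heq]
        exact hq
    have hi0 : ρi = ρ0 := by
      have hz : ρ0 - ρi = 0 := psd_trace_zero hD (by rw [trace_sub, ht0, hti]; ring)
      have := sub_eq_zero.mp hz
      exact this.symm
    refine ⟨ρ0, hρ0, ht0, e0, e1', by rw [ep, hpm, ← h0m], by rw [ei, hi0]⟩
  -- Define E'.
  let E' : Matrix (Fin d) (Fin d) ℂ →ₗ[ℂ] Matrix (Fin d) (Fin d) ℂ :=
    { toFun := fun N => Matrix.of fun x y =>
        E (proj ket0 ⊗ₖ N) ((0 : Fin 2), x) ((0 : Fin 2), y)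
      map_add' := fun N M => by
        ext x y
        show E (proj ket0 ⊗ₖ (N + M)) _ _ = _
        rw [kronecker_add, LinearMap.map_add]
        simp [Matrix.add_apply]
      map_smul' := fun r N => by
        ext x y
        show E (proj ket0 ⊗ₖ (r • N)) _ _ = _
        rw [kronecker_smul, LinearMap.map_smul]
        simp [Matrix.smul_apply] }
  have hE'apply : ∀ N x y, E' N x y = E (proj ket0 ⊗ₖ N) ((0 : Fin 2), x) ((0 : Fin 2), y) :=
    fun N x y => rfl
  -- On densities, E' ρ is the common output state.
  have hE'dens : ∀ ρ : Matrix (Fin d) (Fin d) ℂ, ρ.PosSemidef → ρ.trace = 1 →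
      (E (proj ket0 ⊗ₖ ρ) = proj ket0 ⊗ₖ E' ρ ∧
       E (proj ket1 ⊗ₖ ρ) = proj ket1 ⊗ₖ E' ρ ∧
       E (proj ketPlus ⊗ₖ ρ) = proj ketPlus ⊗ₖ E' ρ ∧
       E (proj ketPlusI ⊗ₖ ρ) = proj ketPlusI ⊗ₖ E' ρ) := by
    intro ρ hρ htρ
    obtain ⟨σ, hσ, htσ, e0, e1, ep, ei⟩ := main ρ hρ htρ
    have hσ' : E' ρ = σ := by
      ext x y
      rw [hE'apply, e0]
      simp [kroneckerMap_apply, proj_ket0]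
    rw [hσ']
    exact ⟨e0, e1, ep, ei⟩
  -- Extend to all matrices N by linearity.
  have key0 : ∀ N, E (proj ket0 ⊗ₖ N) = proj ket0 ⊗ₖ E' N := by
    intro N
    exact extend_density (E.comp (kronL (proj ket0))) ((kronL (proj ket0)).comp E')
      (fun ρ hρ htρ => (hE'dens ρ hρ htρ).1) N
  have key1 : ∀ N, E (proj ket1 ⊗ₖ N) = proj ket1 ⊗ₖ E' N := by
    intro N
    exact extend_density (E.comp (kronL (proj ket1))) ((kronL (proj ket1)).comp E')
      (fun ρ hρ htρ => (hE'dens ρ hρ htρ).2.1) N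
  have keyp : ∀ N, E (proj ketPlus ⊗ₖ N) = proj ketPlus ⊗ₖ E' N := by
    intro N
    exact extend_density (E.comp (kronL (proj ketPlus))) ((kronL (proj ketPlus)).comp E')
      (fun ρ hρ htρ => (hE'dens ρ hρ htρ).2.2.1) N
  have keyi : ∀ N, E (proj ketPlusI ⊗ₖ N) = proj ketPlusI ⊗ₖ E' N := by
    intro N
    exact extend_density (E.comp (kronL (proj ketPlusI))) ((kronL (proj ketPlusI)).comp E')
      (fun ρ hρ htρ => (hE'dens ρ hρ htρ).2.2.2) N
  -- The key lemma for arbitrary left factors.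
  have key : ∀ (A : Matrix (Fin 2) (Fin 2) ℂ) (N : Matrix (Fin d) (Fin d) ℂ),
      E (A ⊗ₖ N) = A ⊗ₖ E' N := by
    intro A N
    conv_lhs => rw [qubit_decomp A]
    conv_rhs => rw [qubit_decomp A]
    rw [add_kronecker, add_kronecker, add_kronecker,
      smul_kronecker, smul_kronecker, smul_kronecker, smul_kronecker,
      LinearMap.map_add, LinearMap.map_add, LinearMap.map_add,
      LinearMap.map_smul, LinearMap.map_smul, LinearMap.map_smul, LinearMap.map_smul,
      key0, key1, keyp, keyi,
      add_kronecker, add_kronecker, add_kronecker,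
      smul_kronecker, smul_kronecker, smul_kronecker, smul_kronecker]
  constructor
  · -- every pure state is preserved
    intro φ _ ρ hρ htρ
    obtain ⟨σ, hσ, htσ, e0, _, _, _⟩ := main ρ hρ htρ
    have hσ' : E' ρ = σ := by
      ext x y
      rw [hE'apply, e0]
      simp [kroneckerMap_apply, proj_ket0]
    exact ⟨σ, hσ, htσ, by rw [key (proj φ) ρ, hσ']⟩
  · refine ⟨E', ?_, ?_, ?_⟩
    · -- E' is CP
      intro k M hM
      have hsub := hM.submatrix (fun p : (Fin 2 × Fin d) × Fin k => (p.1.2, p.2))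
      have hT := hCP k (M.submatrix (fun p : (Fin 2 × Fin d) × Fin k => (p.1.2, p.2))
        (fun p => (p.1.2, p.2))) hsub
      have heq : tensId E' k M
          = (tensId E k (M.submatrix (fun p : (Fin 2 × Fin d) × Fin k => (p.1.2, p.2))
              (fun p => (p.1.2, p.2)))).submatrix
            (fun q : Fin d × Fin k => ((((0 : Fin 2), q.1) : Fin 2 × Fin d), q.2))
            (fun q => (((0 : Fin 2), q.1), q.2)) := by
        ext ⟨x, i⟩ ⟨y, j⟩
        have hin : (Matrix.of fun (a b : Fin 2 × Fin d) =>
              (M.submatrix (fun p : (Fin 2 × Fin d) × Fin k => (p.1.2, p.2))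
                (fun p => (p.1.2, p.2))) (a, i) (b, j))
            = (Matrix.of fun (_ _ : Fin 2) => (1:ℂ)) ⊗ₖ
                (Matrix.of fun a b => M (a, i) (b, j)) := by
          ext ⟨s, x'⟩ ⟨t, y'⟩
          simp [kroneckerMap_apply]
        show E' (Matrix.of fun a b => M (a, i) (b, j)) x y
          = E (Matrix.of fun (a b : Fin 2 × Fin d) =>
              (M.submatrix (fun p : (Fin 2 × Fin d) × Fin k => (p.1.2, p.2))
                (fun p => (p.1.2, p.2))) (a, i) (b, j)) ((0 : Fin 2), x) ((0 : Fin 2), y)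
        rw [hin, key]
        simp [kroneckerMap_apply]
      rw [heq]
      exact hT.submatrix _
    · -- E' is trace preserving
      intro N
      have := hTP (proj ket0 ⊗ₖ N)
      rw [key (proj ket0) N, trace_kronecker, trace_kronecker] at this
      have htr : (proj ket0).trace = 1 := by
        rw [proj_ket0]
        simp [Matrix.trace_fin_two]
      rw [htr, one_mul, one_mul] at this
      exact this
    · -- entrywise formula
      intro M p q
      obtain ⟨p1, p2⟩ := p
      obtain ⟨q1, q2⟩ := q
      have hM : M = ∑ s : Fin 2, ∑ t : Fin 2,
          (Matrix.single s t (1:ℂ)) ⊗ₖ (Matrix.of fun x y => M (s, x) (t, y)) := by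
        ext ⟨a, x⟩ ⟨b, y⟩
        rw [Matrix.sum_apply]
        simp only [Matrix.sum_apply, kroneckerMap_apply, Matrix.single, Matrix.of_apply,
          ite_mul, one_mul, zero_mul, ite_and]
        rw [Finset.sum_comm]
        simp [Finset.sum_ite_eq', Finset.sum_ite_eq]
      conv_lhs => rw [hM]
      rw [map_sum]
      simp only [_root_.map_sum, key, Matrix.sum_apply, kroneckerMap_apply, Matrix.single,
        Matrix.of_apply, ite_mul, one_mul, zero_mul, ite_and]
      simp [Finset.sum_ite_eq', Finset.sum_ite_eq]
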